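/- Let I be a homogeneous ideal of ℤ[x_1, …, x_n] contained in the ideal (x_1, …, x_n), let R_ℤ = ℤ[x_1, …, x_n]/I, and let R_ℚ = ℚ[x_1, …, x_n]/I_ℚ, where I_ℚ is the ideal of ℚ[x_1, …, x_n] generated by the image of I. Then: (1) the ideals p_ℤ = (x_1, …, x_n)/I of R_ℤ and p_ℚ = (x_1, …, x_n)/I_ℚ of R_ℚ are prime, and their heights are equal; (2) the Krull dimension of R_ℤ is at least the Krull dimension of R_ℚ plus 1. -/

import Mathlib

/-!
Over ℤ[x₁, …, xₙ], the ring ℚ[x]/I_ℚ is the localization of ℤ[x]/I at the nonzero integers.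
The ideal (x) contains no nonzero integer, so it survives this localization with its height
unchanged. On the other hand ℤ is a Jacobson ring that is not a field, so every maximal ideal of
the finitely generated ℤ-algebra ℤ[x]/I contains a nonzero integer. Hence a chain of primes of
ℚ[x]/I_ℚ, pulled back to ℤ[x]/I, avoids the nonzero integers and can be prolonged by a maximal
ideal, which gives dim ℤ[x]/I ≥ dim ℚ[x]/I_ℚ + 1.
-/

open MvPolynomial

theorem Order.krullDim_add_one_le_of_strictMono {α β : Type*} [Preorder α] [Preorder β]
    (f : α → β) (hf : StrictMono f) (h : ∀ a, ∃ b, f a < b) :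
    krullDim α + 1 ≤ krullDim β := by
  rcases isEmpty_or_nonempty α with hα | hα
  · simp [krullDim_eq_bot]
  rw [krullDim_eq_iSup_height_of_nonempty, ← WithBot.coe_one, ← WithBot.coe_add,
    ENat.iSup_add, WithBot.coe_iSup (OrderTop.bddAbove _)]
  refine iSup_le fun a ↦ ?_
  obtain ⟨b, hb⟩ := h a
  calc ((height a + 1 : ℕ∞) : WithBot ℕ∞) ≤ ((height (f a) + 1 : ℕ∞) : WithBot ℕ∞) :=
        WithBot.coe_le_coe.mpr (by gcongr; exact height_le_height_apply_of_strictMono f hf a)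
    _ ≤ height b := by exact_mod_cast height_add_one_le hb
    _ ≤ krullDim β := height_le_krullDim b

theorem Ideal.height_eq_krullDim_subtype_le {R : Type*} [CommRing R] (p : Ideal R) [p.IsPrime] :
    (p.height : WithBot ℕ∞) = Order.krullDim {q : PrimeSpectrum R // q.asIdeal ≤ p} := by
  rw [PrimeSpectrum.height_eq_orderHeight ⟨p, ‹_›⟩, Order.height_eq_krullDim_Iic]
  rfl

theorem ringKrullDim_add_one_le_of_isLocalization {A B : Type*} [CommRing A] [CommRing B]
    [Algebra A B] (M : Submonoid A) [IsLocalization M B]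
    (hM : ∀ m : Ideal A, m.IsMaximal → ¬Disjoint (M : Set A) m) :
    ringKrullDim B + 1 ≤ ringKrullDim A := by
  have hmono : Monotone (PrimeSpectrum.comap (algebraMap A B)) :=
    fun _ _ hpq ↦ Ideal.comap_mono hpq
  refine Order.krullDim_add_one_le_of_strictMono _
    (hmono.strictMono_of_injective (PrimeSpectrum.localization_comap_injective B M)) fun q ↦ ?_
  obtain ⟨m, hm, hqm⟩ :=
    Ideal.exists_le_maximal _ (PrimeSpectrum.comap (algebraMap A B) q).isPrime.ne_top
  refine ⟨⟨m, hm.isPrime⟩, lt_of_le_of_ne hqm fun hq ↦ hM m hm ?_⟩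
  rw [show m = q.asIdeal.under A from congrArg PrimeSpectrum.asIdeal hq.symm]
  exact (IsLocalization.disjoint_under_iff M B q.asIdeal).mpr q.isPrime.ne_top

-- If `x` lies in the Jacobson radical then `x * x + 1` is a unit, i.e. `±1`, forcing `x = 0`.
instance Int.isJacobsonRing : IsJacobsonRing ℤ := by
  refine isJacobsonRing_iff_prime_eq.mpr fun P hP ↦ ?_
  rcases eq_or_ne P ⊥ with rfl | hP0
  · refine eq_bot_iff.mpr fun x hx ↦ Ideal.mem_bot.mpr ?_
    rcases Int.isUnit_iff.mp (Ideal.mem_jacobson_bot.mp hx x) with h | h <;>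
      nlinarith [mul_self_nonneg x]
  · have := hP.isMaximal hP0
    exact Ideal.jacobson_eq_self_of_isMaximal

theorem exists_algebraMap_mem_of_isMaximal {R A : Type*} [CommRing R] [IsJacobsonRing R]
    (hR : ¬IsField R) [CommRing A] [Algebra R A] [Algebra.FiniteType R A]
    (m : Ideal A) [m.IsMaximal] : ∃ r : R, r ≠ 0 ∧ algebraMap R A r ∈ m := by
  let := Ideal.Quotient.field m
  have := finite_of_finite_type_of_isJacobsonRing R (A ⧸ m)
  by_contra! h
  refine hR (isField_of_isIntegral_of_isField (S := A ⧸ m) ?_ (Field.toIsField _))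
  refine (injective_iff_map_eq_zero _).mpr fun r hr ↦ ?_
  by_contra hr0
  rw [← Ideal.Quotient.mk_algebraMap, Ideal.Quotient.eq_zero_iff_mem] at hr
  exact h r hr0 hr

namespace MvPolynomial

section idealOfVars

variable {σ R : Type*} [CommRing R]

theorem mem_idealOfVars_iff {p : MvPolynomial σ R} :
    p ∈ idealOfVars σ R ↔ constantCoeff p = 0 := by
  rw [← pow_one (idealOfVars σ R), mem_pow_idealOfVars_iff', constantCoeff_eq]
  simp [Finsupp.degree_eq_zero_iff]

instance isPrime_idealOfVars [IsDomain R] : (idealOfVars σ R).IsPrime := by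
  have : idealOfVars σ R = RingHom.ker (constantCoeff : MvPolynomial σ R →+* R) :=
    Ideal.ext fun _ ↦ mem_idealOfVars_iff.trans RingHom.mem_ker.symm
  rw [this]
  exact RingHom.ker_isPrime _

theorem map_idealOfVars {S : Type*} [CommRing S] (f : R →+* S) :
    (idealOfVars σ R).map (map f) = idealOfVars σ S := by
  simp only [idealOfVars, Ideal.map_span, ← Set.range_comp, Function.comp_def, map_X]

end idealOfVars

section FractionRing

attribute [local instance] algebraMvPolynomial

variable {σ R K : Type*} [CommRing R] [IsDomain R] [Field K] [Algebra R K] [IsFractionRing R K]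
  (I : Ideal (MvPolynomial σ R))

-- `K[σ] ⧸ I_K` is the localization of `R[σ] ⧸ I` at this submonoid.
theorem disjoint_algebraMapSubmonoid_idealOfVars_quotient (hI : I ≤ idealOfVars σ R) :
    Disjoint (Algebra.algebraMapSubmonoid (MvPolynomial σ R ⧸ I)
        ((nonZeroDivisors R).map (C (σ := σ))) : Set (MvPolynomial σ R ⧸ I))
      ((idealOfVars σ R).map (Ideal.Quotient.mk I)) := by
  refine Set.disjoint_left.mpr ?_
  rintro - ⟨_, ⟨r, hr, rfl⟩, rfl⟩ hmem
  rw [SetLike.mem_coe, Ideal.Quotient.algebraMap_eq, Ideal.mem_quotient_iff_mem hI,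
    mem_idealOfVars_iff, constantCoeff_C] at hmem
  exact nonZeroDivisors.ne_zero hr hmem

theorem height_idealOfVars_quotient_fractionRing (hI : I ≤ idealOfVars σ R) :
    ((idealOfVars σ K).map
        (Ideal.Quotient.mk (I.map (algebraMap (MvPolynomial σ R) (MvPolynomial σ K))))).height =
      ((idealOfVars σ R).map (Ideal.Quotient.mk I)).height := by
  have := Ideal.isPrime_map_quotientMk_of_isPrime hI
  let IK := I.map (algebraMap (MvPolynomial σ R) (MvPolynomial σ K))
  have hcomm : (algebraMap _ (MvPolynomial σ K ⧸ IK)).comp (Ideal.Quotient.mk I) =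
      (Ideal.Quotient.mk IK).comp (algebraMap _ _) :=
    RingHom.ext Ideal.Quotient.algebraMap_quotient_map_quotient
  have hvars : (idealOfVars σ R).map (algebraMap _ (MvPolynomial σ K)) = idealOfVars σ K := by
    rw [algebraMap_def, map_idealOfVars]
  rw [← IsLocalization.height_map_of_disjoint (S := MvPolynomial σ K ⧸ IK) _ _
      (disjoint_algebraMapSubmonoid_idealOfVars_quotient I hI),
    Ideal.map_map, hcomm, ← Ideal.map_map, hvars]

theorem ringKrullDim_quotient_fractionRing_add_one_le [IsJacobsonRing R] (hR : ¬IsField R)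
    [Finite σ] :
    ringKrullDim (MvPolynomial σ K ⧸ I.map (algebraMap (MvPolynomial σ R) (MvPolynomial σ K))) +
      1 ≤ ringKrullDim (MvPolynomial σ R ⧸ I) := by
  refine ringKrullDim_add_one_le_of_isLocalization
    (Algebra.algebraMapSubmonoid _ ((nonZeroDivisors R).map (C (σ := σ)))) fun m hm ↦ ?_
  obtain ⟨r, hr0, hrm⟩ := exists_algebraMap_mem_of_isMaximal hR m
  exact Set.not_disjoint_iff.mpr
    ⟨_, ⟨C r, ⟨r, mem_nonZeroDivisors_of_ne_zero hr0, rfl⟩, rfl⟩, hrm⟩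

end FractionRing

end MvPolynomial

theorem stmt19_general {n : ℕ} (I : Ideal (MvPolynomial (Fin n) ℤ))
    (hsub : I ≤ Ideal.span (Set.range (X : Fin n → MvPolynomial (Fin n) ℤ))) :
    (Ideal.map (Ideal.Quotient.mk I)
        (Ideal.span (Set.range (X : Fin n → MvPolynomial (Fin n) ℤ)))).IsPrime ∧
    (Ideal.map (Ideal.Quotient.mk (Ideal.map (MvPolynomial.map (Int.castRingHom ℚ)) I))
        (Ideal.span (Set.range (X : Fin n → MvPolynomial (Fin n) ℚ)))).IsPrime ∧
    Order.krullDim {q : PrimeSpectrum (MvPolynomial (Fin n) ℤ ⧸ I) //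
        q.asIdeal ≤ Ideal.map (Ideal.Quotient.mk I)
          (Ideal.span (Set.range (X : Fin n → MvPolynomial (Fin n) ℤ)))} =
      Order.krullDim {q : PrimeSpectrum (MvPolynomial (Fin n) ℚ ⧸
            Ideal.map (MvPolynomial.map (Int.castRingHom ℚ)) I) //
        q.asIdeal ≤ Ideal.map
          (Ideal.Quotient.mk (Ideal.map (MvPolynomial.map (Int.castRingHom ℚ)) I))
          (Ideal.span (Set.range (X : Fin n → MvPolynomial (Fin n) ℚ)))} ∧
    ringKrullDim (MvPolynomial (Fin n) ℚ ⧸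
        Ideal.map (MvPolynomial.map (Int.castRingHom ℚ)) I) + 1 ≤
      ringKrullDim (MvPolynomial (Fin n) ℤ ⧸ I) := by
  have hIQ : I.map (map (Int.castRingHom ℚ)) ≤ idealOfVars (Fin n) ℚ :=
    map_idealOfVars (Int.castRingHom ℚ) ▸ Ideal.map_mono hsub
  have := Ideal.isPrime_map_quotientMk_of_isPrime hsub
  have := Ideal.isPrime_map_quotientMk_of_isPrime hIQ
  refine ⟨‹_›, ‹_›, ?_, ringKrullDim_quotient_fractionRing_add_one_le I Int.not_isField⟩
  rw [← Ideal.height_eq_krullDim_subtype_le, ← Ideal.height_eq_krullDim_subtype_le]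
  exact congrArg _ (height_idealOfVars_quotient_fractionRing (K := ℚ) I hsub).symm

theorem stmt19 {n : ℕ} (I : Ideal (MvPolynomial (Fin n) ℤ))
    (hhom : ∃ gens : Set (MvPolynomial (Fin n) ℤ),
      (∀ f ∈ gens, ∃ d : ℕ, f.IsHomogeneous d) ∧ I = Ideal.span gens)
    (hsub : I ≤ Ideal.span (Set.range (X : Fin n → MvPolynomial (Fin n) ℤ))) :
    (Ideal.map (Ideal.Quotient.mk I)
        (Ideal.span (Set.range (X : Fin n → MvPolynomial (Fin n) ℤ)))).IsPrime ∧
    (Ideal.map (Ideal.Quotient.mk (Ideal.map (MvPolynomial.map (Int.castRingHom ℚ)) I))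
        (Ideal.span (Set.range (X : Fin n → MvPolynomial (Fin n) ℚ)))).IsPrime ∧
    Order.krullDim {q : PrimeSpectrum (MvPolynomial (Fin n) ℤ ⧸ I) //
        q.asIdeal ≤ Ideal.map (Ideal.Quotient.mk I)
          (Ideal.span (Set.range (X : Fin n → MvPolynomial (Fin n) ℤ)))} =
      Order.krullDim {q : PrimeSpectrum (MvPolynomial (Fin n) ℚ ⧸
            Ideal.map (MvPolynomial.map (Int.castRingHom ℚ)) I) //
        q.asIdeal ≤ Ideal.map
          (Ideal.Quotient.mk (Ideal.map (MvPolynomial.map (Int.castRingHom ℚ)) I))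
          (Ideal.span (Set.range (X : Fin n → MvPolynomial (Fin n) ℚ)))} ∧
    ringKrullDim (MvPolynomial (Fin n) ℚ ⧸
        Ideal.map (MvPolynomial.map (Int.castRingHom ℚ)) I) + 1 ≤
      ringKrullDim (MvPolynomial (Fin n) ℤ ⧸ I) :=
  stmt19_general I hsub
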